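/- arXiv:math/0701164 — 6 statements merged into one kernel-verified Lean document; each statement's English description precedes it below -/
import Mathlib

section
/- If W is a set of codes (Nat.Partrec.Code) such that W is computably enumerable and every element of W is elegant, then W is a finite set. -/
open Nat.Partrec (Code)

/-- A code `c` is *elegant* if it halts on input `0` and no code with a strictly
smaller encoding produces the same output on input `0`. -/
def Elegant (c : Code) : Prop :=
  (c.eval 0).Dom ∧
    ∀ d : Code, Encodable.encode d < Encodable.encode c → d.eval 0 ≠ c.eval 0

/-- A set of codes is computably enumerable if it is empty or the range of a
computable function. -/
def CEsetOfCodes (W : Set Code) : Prop :=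
  W = ∅ ∨ ∃ f : ℕ → Code, Computable f ∧ Set.range f = W

/-- Every computably enumerable set of elegant programs is finite. -/
theorem ce_set_of_elegant_codes_finite (W : Set Code)
    (hce : CEsetOfCodes W) (helegant : ∀ c ∈ W, Elegant c) :
    W.Finite := by
  by_contra hinf
  obtain rfl | ⟨f, hf, hrange⟩ := hce
  · exact hinf (Set.finite_empty)
  -- predicate: the k-th enumerated code is larger than e
  set p : Code → ℕ →. Bool :=
    fun e k => Part.some (decide (Encodable.encode e < Encodable.encode (f k))) with hp
  have hlt2 : Computable₂ fun a b : ℕ => decide (a < b) := Primrec.nat_lt.decide.to_comp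
  have hpcomp : Computable₂ fun (e : Code) (k : ℕ) =>
      decide (Encodable.encode e < Encodable.encode (f k)) :=
    hlt2.comp (Computable.encode.comp Computable.fst)
      (Computable.encode.comp (hf.comp Computable.snd))
  -- the diagonal partial function
  set g : Code → ℕ →. ℕ := fun e _ => (Nat.rfind (p e)).bind fun k => (f k).eval 0 with hg
  have hgpart : Partrec₂ g := by
    apply Partrec.bind
    · have h1 : Computable fun a : (Code × ℕ) × ℕ =>
          decide (Encodable.encode a.1.1 < Encodable.encode (f a.2)) :=
        hpcomp.comp (Computable.fst.comp Computable.fst) Computable.snd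
      exact Partrec.rfind h1.partrec.to₂
    · exact (Nat.Partrec.Code.eval_part.comp (hf.comp Computable.snd)
        (Computable.const 0)).to₂
  obtain ⟨c, hc⟩ := Nat.Partrec.Code.fixed_point₂ hgpart
  -- since W is infinite, some enumerated code is bigger than c
  have : ∃ k, Encodable.encode c < Encodable.encode (f k) := by
    by_contra hnone
    push_neg at hnone
    apply hinf
    have : W ⊆ (fun n => (Encodable.decode n).getD c) ''
        Set.Icc 0 (Encodable.encode c) := by
      rintro d hd
      obtain ⟨k, rfl⟩ := hrange ▸ hd
      exact ⟨Encodable.encode (f k), ⟨Nat.zero_le _, hnone k⟩, by simp⟩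
    exact ((Set.finite_Icc _ _).image _).subset this
  obtain ⟨k, hk⟩ := this
  -- rfind terminates
  have hdom : (Nat.rfind (p c)).Dom := by
    refine Nat.rfind_dom.2 ⟨k, ?_, fun _ => trivial⟩
    simp [hp, hk]
  set k₀ := (Nat.rfind (p c)).get hdom with hk₀
  have hmem : k₀ ∈ Nat.rfind (p c) := Part.get_mem hdom
  have hlt : Encodable.encode c < Encodable.encode (f k₀) := by
    have := Nat.rfind_spec hmem
    simpa [hp] using this
  have heq : c.eval 0 = (f k₀).eval 0 := by
    have h1 : c.eval 0 = g c 0 := congrFun hc 0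
    rw [h1, hg]
    simp only
    rw [Part.eq_some_iff.2 hmem, Part.bind_some]
  exact (helegant (f k₀) (hrange ▸ Set.mem_range_self k₀)).2 c hlt heq
end

section
/- If W ⊆ ℕ × ℕ is a computably enumerable set of pairs such that every pair (x, n) ∈ W truly satisfies n ≤ K x, then the set of second coordinates {n | ∃ x, (x, n) ∈ W} is bounded above. -/
open Nat.Partrec (Code)

/-- Program-size complexity: `K x` is the least encoding of a code that outputs `x`
on input `0`. -/
noncomputable def K (x : ℕ) : ℕ :=
  sInf {n : ℕ | ∃ c : Code, Encodable.encode c = n ∧ c.eval 0 = Part.some x}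

/-- A set of pairs is computably enumerable if it is empty or the range of a
computable function. -/
def CEsetOfPairs (W : Set (ℕ × ℕ)) : Prop :=
  W = ∅ ∨ ∃ f : ℕ → ℕ × ℕ, Computable f ∧ Set.range f = W

/-- Upper bound on provable lower bounds on program-size complexity: if `W` is a
computably enumerable set of pairs `(x, n)` each of which truly satisfies `n ≤ K x`,
then the set of lower bounds `n` appearing in `W` is bounded above. -/
theorem provable_lower_bounds_on_K_bounded (W : Set (ℕ × ℕ))
    (hce : CEsetOfPairs W) (htrue : ∀ p ∈ W, p.2 ≤ K p.1) :
    BddAbove {n : ℕ | ∃ x : ℕ, (x, n) ∈ W} := by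
  rcases hce with rfl | ⟨f, hf, hran⟩
  · convert bddAbove_empty (α := ℕ)
    rfl
    simp
  by_contra hb
  -- the searching function, made self-referential via the recursion theorem
  have hpart : Partrec₂ fun (c : Code) (_ : ℕ) =>
      (Nat.rfind fun k =>
        Part.some (decide (Encodable.encode c < (f k).2))).map fun k => (f k).1 := by
    apply Partrec.map
    · apply Partrec.rfind
      have : Computable₂ fun (p : Code × ℕ) (k : ℕ) =>
          decide (Encodable.encode p.1 < (f k).2) :=
        Primrec.nat_lt.decide.to_comp.comp (Computable.encode.comp <| Computable.fst.comp .fst)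
          (Computable.snd.comp <| hf.comp .snd)
      exact this.partrec₂
    · exact (Computable.fst.comp (hf.comp Computable.snd)).to₂
  obtain ⟨c, hc⟩ := Nat.Partrec.Code.fixed_point₂ hpart
  -- by unboundedness, the search succeeds
  obtain ⟨n, ⟨x, hxW⟩, hn⟩ := (not_bddAbove_iff'.mp hb) (Encodable.encode c)
  have hxr : (x, n) ∈ Set.range f := by rw [hran]; exact hxW
  obtain ⟨k, hk⟩ := hxr
  have hklt : Encodable.encode c < (f k).2 := by
    rw [hk]; exact lt_of_not_ge hn
  obtain ⟨m, hm, _⟩ := Nat.rfind_min'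
    (p := fun k => decide (Encodable.encode c < (f k).2)) (by simpa using hklt)
  have hmlt : Encodable.encode c < (f m).2 := by
    have := Nat.rfind_spec hm
    simpa using this
  have heval : c.eval 0 = Part.some (f m).1 := by
    rw [hc]
    exact Part.eq_some_iff.mpr (Part.mem_map _ hm)
  have hKle : K (f m).1 ≤ Encodable.encode c := Nat.sInf_le ⟨c, rfl, heval⟩
  have hfmW : f m ∈ W := by rw [← hran]; exact ⟨m, rfl⟩
  exact absurd (le_trans (htrue _ hfmW) hKle) (not_le.mpr hmlt)
end

section
/- Program-size complexity is uncomputable: the function K : ℕ → ℕ is not computable. -/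
open Nat.Partrec (Code)

lemma K_set_nonempty (x : ℕ) :
    {n : ℕ | ∃ c : Code, Encodable.encode c = n ∧ c.eval 0 = Part.some x}.Nonempty :=
  ⟨Encodable.encode (Nat.Partrec.Code.const x), Nat.Partrec.Code.const x, rfl,
    Nat.Partrec.Code.eval_const x 0⟩

lemma K_mem (x : ℕ) : ∃ c : Code, Encodable.encode c = K x ∧ c.eval 0 = Part.some x :=
  Nat.sInf_mem (K_set_nonempty x)

lemma K_injective : Function.Injective K := by
  intro a b hab
  obtain ⟨c₁, h₁, e₁⟩ := K_mem a
  obtain ⟨c₂, h₂, e₂⟩ := K_mem b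
  have : c₁ = c₂ := Encodable.encode_injective (by rw [h₁, h₂, hab])
  subst this
  have := e₁.symm.trans e₂
  exact Part.some_injective this

lemma K_unbounded (n : ℕ) : ∃ x, n ≤ K x := by
  by_contra h
  push_neg at h
  have : Set.MapsTo K (Set.univ : Set ℕ) (Set.Iio n) := fun x _ => h x
  have hfin : (Set.univ : Set ℕ).Finite :=
    Set.Finite.of_finite_image (Set.Finite.subset (Set.finite_Iio n) (Set.image_subset_iff.2 this))
      (K_injective.injOn)
  exact Set.infinite_univ hfin

/-- Program-size complexity is uncomputable. -/
theorem K_not_computable : ¬ Computable K := by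
  intro hK
  -- d n = least x with n ≤ K x
  set d : ℕ → ℕ := fun n => Nat.find (K_unbounded n) with hd_def
  have hdspec : ∀ n, n ≤ K (d n) := fun n => Nat.find_spec (K_unbounded n)
  have hd : Computable d := by
    have hp : Computable₂ (fun n x : ℕ => decide (n ≤ K x)) :=
      (Primrec.nat_le.decide.to_comp.comp (Computable.fst (α := ℕ) (β := ℕ)) (hK.comp Computable.snd)).to₂
    have hpr : Partrec fun n => Nat.rfind (fun x => Part.some (decide (n ≤ K x))) :=
      Partrec.rfind hp.partrec₂
    refine hpr.of_eq_tot fun n => ?_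
    refine Nat.mem_rfind.2 ?_
    constructor
    · simpa using hdspec n
    · intro m hm
      simpa using Nat.find_min (K_unbounded n) hm
  -- build computable f : Code → Code, c ↦ const (d (encode c + 1))
  have hf : Computable fun c : Code => Nat.Partrec.Code.const (d (Encodable.encode c + 1)) :=
    (Nat.Partrec.Code.primrec_const.to_comp).comp
      (hd.comp (Computable.succ.comp Computable.encode))
  obtain ⟨c, hc⟩ := Nat.Partrec.Code.fixed_point hf
  have hc0 : c.eval 0 = Part.some (d (Encodable.encode c + 1)) := by
    rw [← hc]; exact Nat.Partrec.Code.eval_const _ 0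
  have hle : K (d (Encodable.encode c + 1)) ≤ Encodable.encode c :=
    Nat.sInf_le ⟨c, rfl, hc0⟩
  have := hdspec (Encodable.encode c + 1)
  omega
end

section
/- There is no unbounded computable lower bound on program-size complexity: if f : ℕ → ℕ is computable and f x ≤ K x for all x, then f is bounded above. -/
open Nat.Partrec (Code)

/-- There is no unbounded computable lower bound on program-size complexity. -/
theorem computable_lower_bound_on_K_bounded (f : ℕ → ℕ)
    (hf : Computable f) (hlb : ∀ x, f x ≤ K x) :
    ∃ B : ℕ, ∀ x, f x ≤ B := by
  by_contra h
  push_neg at h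
  -- the search function: on any input, find least x with f x > encode c
  set F : Code → ℕ →. ℕ := fun c _ =>
    Nat.rfind (fun x => Part.some (decide (Encodable.encode c < f x))) with hF
  have h1 : Computable₂ fun (a : Code × ℕ) (x : ℕ) =>
      (decide (Encodable.encode a.1 < f x)) :=
    Computable₂.comp₂ (Primrec₂.to_comp Primrec.nat_lt.decide)
      ((Computable.encode.comp Computable.fst).comp Computable.fst).to₂
      ((hf.comp Computable.id).comp Computable.snd).to₂
  have hFp : Partrec₂ F := Partrec.rfind h1.partrec₂
  obtain ⟨c, hc⟩ := Nat.Partrec.Code.fixed_point₂ hFp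
  obtain ⟨x, hx⟩ := h (Encodable.encode c)
  -- least such x
  have hex : ∃ x, Encodable.encode c < f x := ⟨x, hx⟩
  set m := Nat.find hex with hm
  have hmspec : Encodable.encode c < f m := Nat.find_spec hex
  have hmem : m ∈ c.eval 0 := by
    rw [hc, hF]
    refine Nat.mem_rfind.2 ?_
    constructor
    · simpa using hmspec
    · intro k hk
      simpa using Nat.find_min hex hk
  have heval : c.eval 0 = Part.some m := Part.eq_some_iff.2 hmem
  have hK : K m ≤ Encodable.encode c :=
    Nat.sInf_le ⟨c, rfl, heval⟩
  exact absurd (hlb m) (by omega)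
end

section
/- Kraft inequality for self-delimiting programs: if S is a set of binary strings (List Bool) that is prefix-free, meaning no element of S is a proper prefix of another element of S, then the sum ∑' (p : S), (2 : ℝ)^(−(p.length : ℤ)) is at most 1. (This is the fact underlying the convergence of the halting probability Ω = ∑ over halting self-delimiting programs p of 2^(−|p|), which as a probability must lie between zero and one.) -/
/-!
A binary string `p` names the dyadic interval of reals in `[0, 1)` whose binary expansion
starts with `p`; it has length `2^(-|p|)`. The intervals of two strings neither of which is a
prefix of the other are disjoint, so for a prefix-free set the lengths add up to the measure of
a subset of `[0, 1)`, which is at most `1`.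
-/

open Function MeasureTheory Set

noncomputable def binaryValue : List Bool → ℝ
  | [] => 0
  | b :: t => ((if b then 1 else 0) + binaryValue t) / 2

noncomputable def dyadicInterval (p : List Bool) : Set ℝ :=
  Ico (binaryValue p) (binaryValue p + 2 ^ (-(p.length : ℤ)))

lemma mem_dyadicInterval_cons {x : ℝ} {b : Bool} {t : List Bool} :
    x ∈ dyadicInterval (b :: t) ↔ 2 * x - (if b then 1 else 0) ∈ dyadicInterval t := by
  have hhalf : (2 : ℝ) ^ (-((t.length + 1 : ℕ) : ℤ)) = 2 ^ (-(t.length : ℤ)) / 2 := by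
    rw [Nat.cast_succ, neg_add, zpow_add₀ two_ne_zero]
    norm_num [div_eq_mul_inv]
  simp only [dyadicInterval, binaryValue, mem_Ico, List.length_cons, hhalf]
  constructor <;> rintro ⟨h₁, h₂⟩ <;> constructor <;> linarith

lemma dyadicInterval_subset_Ico (p : List Bool) : dyadicInterval p ⊆ Ico 0 1 := by
  induction p with
  | nil => simp [dyadicInterval, binaryValue]
  | cons b t ih =>
    intro x hx
    have := ih (mem_dyadicInterval_cons.mp hx)
    cases b <;> simp only [mem_Ico, Bool.false_eq_true, if_true, if_false] at this ⊢ <;>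
      constructor <;> linarith

lemma disjoint_dyadicInterval {p q : List Bool} (hpq : ¬p <+: q) (hqp : ¬q <+: p) :
    Disjoint (dyadicInterval p) (dyadicInterval q) := by
  induction p generalizing q with
  | nil => exact absurd List.nil_prefix hpq
  | cons a p ih =>
    cases q with
    | nil => exact absurd List.nil_prefix hqp
    | cons b q =>
      rw [disjoint_left]
      intro x hxp hxq
      rw [mem_dyadicInterval_cons] at hxp hxq
      by_cases hab : a = b
      · subst hab
        rw [List.prefix_cons_inj] at hpq hqp
        exact disjoint_left.mp (ih hpq hqp) hxp hxq
      · -- different first bits place `x` in different halves of `[0, 1)`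
        have hp := dyadicInterval_subset_Ico p hxp
        have hq := dyadicInterval_subset_Ico q hxq
        cases a <;> cases b <;> simp only [mem_Ico] at hp hq <;> grind

lemma volume_dyadicInterval (p : List Bool) :
    volume (dyadicInterval p) = ENNReal.ofReal (2 ^ (-(p.length : ℤ))) := by
  simp [dyadicInterval, Real.volume_Ico]

lemma tsum_volume_dyadicInterval_le_one {S : Set (List Bool)}
    (hS : ∀ p ∈ S, ∀ q ∈ S, p <+: q → p = q) :
    ∑' p : S, volume (dyadicInterval p) ≤ 1 := by
  have hdisj : Pairwise (Disjoint on fun p : S => dyadicInterval p) := fun p q hne =>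
    disjoint_dyadicInterval (fun h => hne (Subtype.ext (hS _ p.2 _ q.2 h)))
      (fun h => hne (Subtype.ext (hS _ q.2 _ p.2 h).symm))
  rw [← measure_iUnion hdisj fun _ => measurableSet_Ico]
  calc volume (⋃ p : S, dyadicInterval p)
      ≤ volume (Ico (0 : ℝ) 1) := measure_mono (iUnion_subset (dyadicInterval_subset_Ico ·))
    _ = 1 := by simp

/-- Kraft inequality for self-delimiting programs: for a prefix-free set `S` of
binary strings, the sum of `2^(-|p|)` over `p ∈ S` converges and is at most `1`. -/
theorem kraft_inequality (S : Set (List Bool))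
    (hpf : ∀ p ∈ S, ∀ q ∈ S, p <+: q → p = q) :
    Summable (fun p : S => (2 : ℝ) ^ (-((p : List Bool).length : ℤ))) ∧
      ∑' p : S, (2 : ℝ) ^ (-((p : List Bool).length : ℤ)) ≤ 1 := by
  have hle := tsum_volume_dyadicInterval_le_one hpf
  have hlength : ∀ p : S,
      (2 : ℝ) ^ (-((p : List Bool).length : ℤ)) = (volume (dyadicInterval p)).toReal := fun p => by
    rw [volume_dyadicInterval, ENNReal.toReal_ofReal (by positivity)]
  simp only [hlength]
  refine ⟨ENNReal.summable_toReal (ne_top_of_le_ne_top ENNReal.one_ne_top hle), ?_⟩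
  rw [← ENNReal.tsum_toReal_eq fun p => by simp [volume_dyadicInterval]]
  exact ENNReal.toReal_le_of_le_ofReal zero_le_one (by simpa using hle)
end

section
/- Let e : ℕ → ℕ be a computable function such that for every k and every n, ((Nat.Partrec.Code.ofNat (e k)).eval n).Dom holds, i.e., every enumerated code computes a total function. Then there exists a computable total function F : ℕ → ℕ such that for every k, F n > ((Nat.Partrec.Code.ofNat (e k)).eval n).get _ for all sufficiently large n; in particular F is not equal to any of the enumerated functions. -/
open Nat.Partrec (Code)

/-- Diagonalization over provably total functions: given a computable enumeration
`e` of codes each of which computes a total function, there is a computable total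
function `F` that eventually strictly dominates every enumerated function; in
particular `F` differs from every enumerated function. -/
theorem diagonalize_over_total_functions (e : ℕ → ℕ) (he : Computable e)
    (htot : ∀ k n : ℕ, ((Denumerable.ofNat Code (e k)).eval n).Dom) :
    ∃ F : ℕ → ℕ, Computable F ∧
      (∀ k : ℕ, ∀ᶠ n in Filter.atTop,
        ((Denumerable.ofNat Code (e k)).eval n).get (htot k n) < F n) ∧
      (∀ k : ℕ, F ≠ fun n => ((Denumerable.ofNat Code (e k)).eval n).get (htot k n)) := by
  set g : ℕ → ℕ → ℕ := fun k n => ((Denumerable.ofNat Code (e k)).eval n).get (htot k n)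
    with hg
  have hgpart : Partrec fun p : ℕ × ℕ => (Denumerable.ofNat Code (e p.1)).eval p.2 :=
    Nat.Partrec.Code.eval_part.comp
      ((Computable.ofNat Code).comp (he.comp Computable.fst)) Computable.snd
  have hgc : Computable₂ g := hgpart.of_eq fun p => (Part.some_get _).symm
  -- M a m = max over k < m of g k a
  set M : ℕ → ℕ → ℕ := fun a m => Nat.rec 0 (fun k IH => max IH (g k a)) m with hM
  have hMle : ∀ a m k, k < m → g k a ≤ M a m := by
    intro a m
    induction m with
    | zero => intro k h; omega
    | succ m ih =>
      intro k h
      rcases Nat.lt_succ_iff_lt_or_eq.mp h with h | h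
      · exact le_trans (ih k h) (le_max_left _ _)
      · subst h; exact le_max_right _ _
  refine ⟨fun n => M n (n + 1) + 1, ?_, ?_, ?_⟩
  · have : Computable fun n : ℕ => M n (n + 1) :=
      Computable.nat_rec Computable.succ (Computable.const 0)
        ((Primrec.nat_max.to_comp.comp (Computable.snd.comp Computable.snd)
          (hgc.comp (Computable.fst.comp Computable.snd) Computable.fst)).to₂)
    exact Primrec.succ.to_comp.comp this
  · intro k
    filter_upwards [Filter.eventually_ge_atTop k] with n hn
    exact Nat.lt_succ_of_le (hMle n (n + 1) k (by omega))
  · intro k h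
    have h2 : ∀ᶠ n in Filter.atTop, g k n < M n (n + 1) + 1 := by
      filter_upwards [Filter.eventually_ge_atTop k] with n hn
      exact Nat.lt_succ_of_le (hMle n (n + 1) k (by omega))
    rcases h2.exists with ⟨n, hn⟩
    have h3 := congrFun h n
    simp only [hg] at hn
    omega
end
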